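/- For every c > 0 there exist constants C > 0 and ρ ∈ (0,1) such that for all k ≥ 2, ∫_{1/k}^{π/2} exp(−c ∑_{j<k} f(jx)²) dx ≤ C·ρ^k, where f(x) is the distance from x to πℤ. -/

import Mathlib

open scoped Real
open Finset

/-- The distance from `x` to the nearest integer multiple of `π`. -/
noncomputable def distPiZ (x : ℝ) : ℝ :=
  Metric.infDist x {y : ℝ | ∃ j : ℤ, y = j * π}

lemma distPiZ_nonneg (x : ℝ) : 0 ≤ distPiZ x := Metric.infDist_nonneg

lemma abs_sin_le_distPiZ (x : ℝ) : |Real.sin x| ≤ distPiZ x := by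
  have hne : {y : ℝ | ∃ j : ℤ, y = j * π}.Nonempty := ⟨0, ⟨0, by simp⟩⟩
  by_contra h
  push_neg at h
  rw [distPiZ, Metric.infDist_lt_iff hne] at h
  obtain ⟨y, ⟨j, rfl⟩, hy⟩ := h
  have h1 : |Real.sin ((j : ℝ) * π - x)| = |Real.sin x| := by
    rw [Real.sin_int_mul_pi_sub, abs_neg, abs_mul]
    rcases Int.even_or_odd j with hj | hj
    · rw [hj.neg_one_zpow]; simp
    · rw [hj.neg_one_zpow]; simp
  have h2 : |Real.sin x| ≤ dist x ((j : ℝ) * π) := by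
    calc |Real.sin x| = |Real.sin ((j : ℝ) * π - x)| := h1.symm
      _ ≤ |(j : ℝ) * π - x| := Real.abs_sin_le_abs
      _ = dist x ((j : ℝ) * π) := by rw [Real.dist_eq, abs_sub_comm]
  linarith

lemma sin_sq_le_distPiZ_sq (x : ℝ) : Real.sin x ^ 2 ≤ distPiZ x ^ 2 := by
  have := abs_sin_le_distPiZ x
  have h0 := abs_nonneg (Real.sin x)
  calc Real.sin x ^ 2 = |Real.sin x| ^ 2 := (sq_abs _).symm
    _ ≤ distPiZ x ^ 2 := by nlinarith

lemma sum_cos_mul (k : ℕ) (x : ℝ) :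
    (∑ j ∈ range k, Real.cos (2 * j * x)) * (2 * Real.sin x)
      = Real.sin ((2 * k - 1) * x) + Real.sin x := by
  induction k with
  | zero =>
    simp only [Finset.range_zero, Finset.sum_empty, zero_mul, Nat.cast_zero, mul_zero,
      zero_sub]
    rw [neg_one_mul, Real.sin_neg]
    ring
  | succ n ih =>
    rw [Finset.sum_range_succ, add_mul, ih]
    have h : Real.sin ((2 * (n + 1 : ℕ) - 1) * x) - Real.sin ((2 * (n : ℕ) - 1) * x)
        = 2 * Real.sin x * Real.cos (2 * n * x) := by
      rw [Real.sin_sub_sin]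
      push_cast
      ring_nf
    push_cast at h ⊢
    linarith [h]

lemma continuous_distPiZ : Continuous distPiZ :=
  Metric.continuous_infDist_pt _

set_option maxHeartbeats 1000000 in
lemma key_lower (k : ℕ) (hk : 2 ≤ k) (x : ℝ) (hx1 : 1 / (k : ℝ) ≤ x) (hx2 : x ≤ π / 2) :
    (k : ℝ) / 320 ≤ ∑ j ∈ range k, distPiZ (j * x) ^ 2 := by
  have hkR : (2 : ℝ) ≤ (k : ℝ) := by exact_mod_cast hk
  have hk0 : (0 : ℝ) < k := by linarith
  have hpi : (3.141592 : ℝ) < π := Real.pi_gt_d6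
  have hpi' : π < 3.1416 := Real.pi_lt_d6.trans (by norm_num)
  have hx0 : 0 < x := lt_of_lt_of_le (by positivity) hx1
  have hsin : ∀ j ∈ range k, Real.sin ((j : ℝ) * x) ^ 2 ≤ distPiZ ((j : ℝ) * x) ^ 2 :=
    fun j _ => sin_sq_le_distPiZ_sq _
  have hmain : (k : ℝ) / 320 ≤ ∑ j ∈ range k, Real.sin ((j : ℝ) * x) ^ 2 := by
    rcases le_or_gt x (π / k) with hxs | hxl
    · -- Case A: small x, use terms with j between k/4 and k/2
      set a := (k + 3) / 4 with ha
      set b := k / 2 + 1 with hb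
      have hdiv : 4 * a ≥ k ∧ 2 * (b - 1) ≤ k ∧ b ≤ k ∧ a ≤ b - 1 ∧ 8 * (b - a) ≥ k := by
        constructor
        · omega
        constructor
        · omega
        constructor
        · omega
        constructor
        · omega
        · omega
      obtain ⟨h4a, h2b, hbk, hab, hcard8⟩ := hdiv
      have hsub : Finset.Ico a b ⊆ range k := by
        intro j hj
        rw [Finset.mem_Ico] at hj
        rw [Finset.mem_range]
        omega
      have hterm : ∀ j ∈ Finset.Ico a b, (1 : ℝ) / 40 ≤ Real.sin ((j : ℝ) * x) ^ 2 := by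
        intro j hj
        rw [Finset.mem_Ico] at hj
        have hja : (k : ℝ) / 4 ≤ (j : ℝ) := by
          have : (k : ℝ) ≤ 4 * a := by exact_mod_cast h4a
          have : (a : ℝ) ≤ j := by exact_mod_cast hj.1
          have : (k : ℝ) ≤ 4 * (j : ℝ) := by
            have haj : (a : ℝ) ≤ j := by exact_mod_cast hj.1
            have hka : (k : ℝ) ≤ 4 * a := by exact_mod_cast h4a
            linarith
          linarith
        have hjb : (j : ℝ) ≤ (k : ℝ) / 2 := by
          have : 2 * j ≤ k := by omega
          have : (2 : ℝ) * j ≤ k := by exact_mod_cast this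
          linarith
        have hjx1 : (1 : ℝ) / 4 ≤ (j : ℝ) * x := by
          have : (k : ℝ) / 4 * x ≤ (j : ℝ) * x := by nlinarith
          have h14 : (1 : ℝ) / 4 ≤ (k : ℝ) / 4 * x := by
            have : (k : ℝ) * x ≥ 1 := by
              have := (div_le_iff₀ hk0).mp (by linarith [hx1] : 1 / (k:ℝ) ≤ x)
              nlinarith [hx1, hk0]
            linarith
          linarith
        have hjx2 : (j : ℝ) * x ≤ π / 2 := by
          have h1 : (j : ℝ) * x ≤ (k : ℝ) / 2 * x :=
            mul_le_mul_of_nonneg_right hjb hx0.le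
          have h2 : (k : ℝ) / 2 * x ≤ (k : ℝ) / 2 * (π / k) :=
            mul_le_mul_of_nonneg_left hxs (by positivity)
          have h3 : (k : ℝ) / 2 * (π / k) = π / 2 := by field_simp
          linarith
        have hjx0 : (0 : ℝ) ≤ (j : ℝ) * x := by positivity
        have hs := Real.mul_le_sin hjx0 hjx2
        have hs2 : (1 : ℝ) / (2 * π) ≤ Real.sin ((j : ℝ) * x) := by
          have : 2 / π * (1 / 4) ≤ 2 / π * ((j : ℝ) * x) := by
            apply mul_le_mul_of_nonneg_left hjx1
            positivity
          calc (1 : ℝ) / (2 * π) = 2 / π * (1 / 4) := by field_simp; ring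
            _ ≤ 2 / π * ((j : ℝ) * x) := this
            _ ≤ Real.sin ((j : ℝ) * x) := hs
        have h2pi : (0 : ℝ) < 1 / (2 * π) := by positivity
        have hq : (1 / (2 * π)) ^ 2 ≤ Real.sin ((j : ℝ) * x) ^ 2 := by
          nlinarith [hs2, h2pi]
        have hq2 : (1 : ℝ) / 40 ≤ (1 / (2 * π)) ^ 2 := by
          rw [div_pow, one_pow, div_le_div_iff₀ (by norm_num) (by positivity)]
          nlinarith [hpi', Real.pi_pos]
        linarith
      have hnonneg : ∀ j ∈ range k, j ∉ Finset.Ico a b → (0 : ℝ) ≤ Real.sin ((j : ℝ) * x) ^ 2 :=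
        fun j _ _ => sq_nonneg _
      have hsum1 : ∑ j ∈ Finset.Ico a b, Real.sin ((j : ℝ) * x) ^ 2
          ≤ ∑ j ∈ range k, Real.sin ((j : ℝ) * x) ^ 2 :=
        Finset.sum_le_sum_of_subset_of_nonneg hsub hnonneg
      have hsum2 : ((Finset.Ico a b).card : ℝ) * (1 / 40)
          ≤ ∑ j ∈ Finset.Ico a b, Real.sin ((j : ℝ) * x) ^ 2 := by
        have := Finset.card_nsmul_le_sum (Finset.Ico a b)
          (fun j => Real.sin ((j : ℝ) * x) ^ 2) (1 / 40) hterm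
        simpa [nsmul_eq_mul] using this
      have hcard : (k : ℝ) / 8 ≤ ((Finset.Ico a b).card : ℝ) := by
        rw [Nat.card_Ico]
        have : k ≤ 8 * (b - a) := hcard8
        have : (k : ℝ) ≤ 8 * ((b - a : ℕ) : ℝ) := by exact_mod_cast this
        linarith
      calc (k : ℝ) / 320 = (k : ℝ) / 8 * (1 / 40) := by ring
        _ ≤ ((Finset.Ico a b).card : ℝ) * (1 / 40) := by
            apply mul_le_mul_of_nonneg_right hcard; norm_num
        _ ≤ _ := hsum2.trans hsum1
    · -- Case B: x ≥ π/k, use the Dirichlet kernel bound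
      have hsinx : 2 / (k : ℝ) ≤ Real.sin x := by
        have := Real.mul_le_sin (le_of_lt hx0) hx2
        have : 2 / π * (π / k) ≤ Real.sin x := by
          have h2 : 2 / π * (π / (k : ℝ)) ≤ 2 / π * x := by
            apply mul_le_mul_of_nonneg_left (le_of_lt hxl)
            positivity
          linarith [Real.mul_le_sin (le_of_lt hx0) hx2]
        calc 2 / (k : ℝ) = 2 / π * (π / k) := by field_simp
          _ ≤ Real.sin x := this
      have hsinx0 : 0 < Real.sin x := lt_of_lt_of_le (by positivity) hsinx
      have hcos := sum_cos_mul k x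
      have hcbound : ∑ j ∈ range k, Real.cos (2 * (j : ℝ) * x) ≤ (k : ℝ) / 4 + 1 / 2 := by
        have h1 : (∑ j ∈ range k, Real.cos (2 * (j : ℝ) * x)) * (2 * Real.sin x)
            ≤ 1 + Real.sin x := by
          rw [hcos]; linarith [Real.sin_le_one ((2 * (k : ℝ) - 1) * x)]
        have h2 : 1 / (2 * Real.sin x) ≤ (k : ℝ) / 4 := by
          rw [div_le_div_iff₀ (by positivity) (by norm_num)]
          have hfun : 2 / (k : ℝ) * k = 2 := by field_simp
          nlinarith [mul_le_mul_of_nonneg_right hsinx hk0.le, hfun]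
        have h3 : (∑ j ∈ range k, Real.cos (2 * (j : ℝ) * x))
            ≤ (1 + Real.sin x) / (2 * Real.sin x) := by
          rw [le_div_iff₀ (by positivity)]
          exact h1
        have h4 : (1 + Real.sin x) / (2 * Real.sin x) = 1 / (2 * Real.sin x) + 1 / 2 := by
          field_simp
        linarith [h3, h4 ▸ h3]
      have heq : ∑ j ∈ range k, Real.sin ((j : ℝ) * x) ^ 2
          = (k : ℝ) / 2 - (∑ j ∈ range k, Real.cos (2 * (j : ℝ) * x)) / 2 := by
        have : ∀ j ∈ range k, Real.sin ((j : ℝ) * x) ^ 2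
            = 1 / 2 - Real.cos (2 * (j : ℝ) * x) / 2 := by
          intro j _
          rw [Real.sin_sq_eq_half_sub]
          ring_nf
        rw [Finset.sum_congr rfl this, Finset.sum_sub_distrib]
        simp [Finset.sum_div]
        ring
      rw [heq]
      linarith
  calc (k : ℝ) / 320 ≤ ∑ j ∈ range k, Real.sin ((j : ℝ) * x) ^ 2 := hmain
    _ ≤ ∑ j ∈ range k, distPiZ ((j : ℝ) * x) ^ 2 := Finset.sum_le_sum hsin

/-- For every `c > 0` there are `C > 0` and `ρ ∈ (0,1)` such that for all
`k ≥ 2`, `∫_{1/k}^{π/2} exp(−c ∑_{j<k} f(jx)²) dx ≤ C·ρ^k`. -/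
theorem integral_away_from_zero_exponentially_small (c : ℝ) (hc : 0 < c) :
    ∃ C > (0 : ℝ), ∃ ρ : ℝ, 0 < ρ ∧ ρ < 1 ∧ ∀ k : ℕ, 2 ≤ k →
      (∫ x in (1 / (k : ℝ))..(π / 2),
          Real.exp (-c * ∑ j ∈ Finset.range k, distPiZ (j * x) ^ 2)) ≤
        C * ρ ^ k := by
  refine ⟨π / 2, by positivity, Real.exp (-(c / 320)), Real.exp_pos _, ?_, ?_⟩
  · rw [Real.exp_lt_one_iff]
    linarith
  intro k hk
  have hkR : (2 : ℝ) ≤ (k : ℝ) := by exact_mod_cast hk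
  have hk0 : (0 : ℝ) < k := by linarith
  have hab : 1 / (k : ℝ) ≤ π / 2 := by
    have : 1 / (k : ℝ) ≤ 1 / 2 := by
      apply div_le_div_of_nonneg_left (by norm_num) (by norm_num) hkR
    linarith [Real.pi_gt_three]
  have hcont : Continuous fun x : ℝ =>
      Real.exp (-c * ∑ j ∈ Finset.range k, distPiZ (j * x) ^ 2) := by
    apply Real.continuous_exp.comp
    apply Continuous.mul continuous_const
    apply continuous_finset_sum
    intro j _
    exact (continuous_distPiZ.comp (continuous_const.mul continuous_id)).pow 2
  have hint : IntervalIntegrable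
      (fun x : ℝ => Real.exp (-c * ∑ j ∈ Finset.range k, distPiZ (j * x) ^ 2))
      MeasureTheory.volume (1 / (k : ℝ)) (π / 2) :=
    hcont.intervalIntegrable _ _
  set M := Real.exp (-(c / 320) * k) with hM
  have hbound : ∀ x ∈ Set.Icc (1 / (k : ℝ)) (π / 2),
      Real.exp (-c * ∑ j ∈ Finset.range k, distPiZ (j * x) ^ 2) ≤ M := by
    intro x hx
    rw [hM, Real.exp_le_exp]
    have hkey := key_lower k hk x hx.1 hx.2
    nlinarith [hkey]
  calc (∫ x in (1 / (k : ℝ))..(π / 2),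
        Real.exp (-c * ∑ j ∈ Finset.range k, distPiZ (j * x) ^ 2))
      ≤ ∫ _x in (1 / (k : ℝ))..(π / 2), M := by
        apply intervalIntegral.integral_mono_on hab hint intervalIntegrable_const hbound
    _ = (π / 2 - 1 / (k : ℝ)) * M := by rw [intervalIntegral.integral_const, smul_eq_mul]
    _ ≤ (π / 2) * M := by
        apply mul_le_mul_of_nonneg_right _ (Real.exp_pos _).le
        have : 0 < 1 / (k : ℝ) := by positivity
        linarith
    _ = (π / 2) * Real.exp (-(c / 320)) ^ k := by
        rw [hM, ← Real.exp_nat_mul]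
        ring_nf
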